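/- Σ_{p ∈ P_n} q^{n - tail(p)} = Σ_{π ∈ T_n} q^{ldes(π)}; that is, the statistic n - tail on Dyck paths of length 2n is equidistributed with the last-descent statistic on 321-avoiding permutations of S_n. -/

import Mathlib

open Finset

/-- A permutation is 321-avoiding if it has no decreasing subsequence of length 3. -/
def Avoids321 {n : ℕ} (π : Equiv.Perm (Fin n)) : Prop :=
  ¬ ∃ i j k : Fin n, i < j ∧ j < k ∧ π k < π j ∧ π j < π i

instance {n : ℕ} : DecidablePred (Avoids321 (n := n)) := fun π =>
  decidable_of_iff (¬ ∃ i j k : Fin n, i < j ∧ j < k ∧ π k < π j ∧ π j < π i) Iff.rfl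

/-- The set `T_n` of 321-avoiding permutations of order `n`. -/
def Tset (n : ℕ) : Finset (Equiv.Perm (Fin n)) :=
  Finset.univ.filter (fun π => Avoids321 π)

/-- The value `π(i)` in one-based notation: positions `1,…,n`, values `1,…,n`. -/
def pval {n : ℕ} (π : Equiv.Perm (Fin n)) (i : ℕ) : ℕ :=
  if h : i - 1 < n then (π ⟨i - 1, h⟩ : ℕ) + 1 else 0

/-- The descent set `Des(π) = {1 ≤ i ≤ n-1 : π(i) > π(i+1)}` (one-based). -/
def desSet {n : ℕ} (π : Equiv.Perm (Fin n)) : Finset ℕ :=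
  (Finset.Icc 1 (n - 1)).filter (fun i => pval π (i + 1) < pval π i)

/-- The last descent of `π` (0 for the identity). -/
def ldes {n : ℕ} (π : Equiv.Perm (Fin n)) : ℕ := (desSet π).sup id

/-- `lind(π) = π⁻¹(n)`, the (one-based) position of the letter `n` in `π`. -/
def lind {n : ℕ} (π : Equiv.Perm (Fin n)) : ℕ := pval π.symm n

/-- The inversion number of `π`. -/
def invNum {n : ℕ} (π : Equiv.Perm (Fin n)) : ℕ :=
  (Finset.univ.filter (fun q : Fin n × Fin n => q.1 < q.2 ∧ π q.2 < π q.1)).card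

/-- A ±1 sequence of length `2n` (`true` = +1) is a Dyck path if it has `n` up
steps and every prefix has at least as many up steps as down steps. -/
def IsDyckPred (n : ℕ) (p : Fin (2 * n) → Bool) : Prop :=
  (Finset.univ.filter (fun i => p i = true)).card = n ∧
  ∀ k ≤ 2 * n,
    k ≤ 2 * (Finset.univ.filter (fun i : Fin (2 * n) => (i : ℕ) < k ∧ p i = true)).card

instance (n : ℕ) : DecidablePred (IsDyckPred n) := fun p => by
  unfold IsDyckPred; infer_instance

/-- The set `P_n` of Dyck paths of length `2n`. -/
def DyckPath (n : ℕ) : Type := { p : Fin (2 * n) → Bool // IsDyckPred n p }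

instance (n : ℕ) : Fintype (DyckPath n) := by unfold DyckPath; infer_instance

/-- The `i`-th step of the path, one-based; `true` = +1, `false` = -1. -/
def pstep {n : ℕ} (p : DyckPath n) (i : ℕ) : Bool :=
  if h : i - 1 < 2 * n then p.1 ⟨i - 1, h⟩ else false

/-- `Des(p) = {1 ≤ i ≤ n-1 : p_i = +1, p_{i+1} = -1}`. -/
def pathDes {n : ℕ} (p : DyckPath n) : Finset ℕ :=
  (Finset.Icc 1 (n - 1)).filter (fun i => pstep p i = true ∧ pstep p (i + 1) = false)

/-- `Des(p⁻¹) = {1 ≤ i ≤ n-1 : p_{2n-i} = +1, p_{2n-i+1} = -1}`. -/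
def pathDesInv {n : ℕ} (p : DyckPath n) : Finset ℕ :=
  (Finset.Icc 1 (n - 1)).filter
    (fun i => pstep p (2 * n - i) = true ∧ pstep p (2 * n - i + 1) = false)

/-- `ldes(p) = max{1 ≤ i ≤ n-1 : p_i = +1, p_{i+1} = -1}` (0 if none). -/
def pathLdes {n : ℕ} (p : DyckPath n) : ℕ := (pathDes p).sup id

/-- `lind(p) = max{1 ≤ i ≤ n : p_i = +1, p_{i+1} = -1}` (0 if none). -/
def pathLind {n : ℕ} (p : DyckPath n) : ℕ :=
  ((Finset.Icc 1 n).filter (fun i => pstep p i = true ∧ pstep p (i + 1) = false)).sup id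

/-- `tail(p) = 2n - max{i : p_i = +1, p_{i+1} = -1}`, the number of consecutive
down steps at the end of `p`. -/
def pathTail {n : ℕ} (p : DyckPath n) : ℕ :=
  2 * n -
    ((Finset.Icc 1 (2 * n - 1)).filter
      (fun i => pstep p i = true ∧ pstep p (i + 1) = false)).sup id

/-!
Both statistics have their fibres counted by the Catalan triangle: for `k ≤ n`, the objects of
size `n + 1` with statistic `k` are in bijection with those of size `n` with statistic `≤ k`.

For a Dyck path, `n - tail` is `lastPeak - n`, where `lastPeak` is the position of the last up
step. If that step sits at `n + k` (`0`-indexed), turning it into a down step and dropping the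
final two down steps leaves a Dyck path whose up steps all lie before `n + k`, and conversely.

For permutations, remove the largest letter. Inserting it at position `m` into `σ ∈ T_n` gives a
321-avoiding permutation iff `σ` increases after position `m`, i.e. `ldes σ ≤ m`; the new last
descent is then `m + 1`, or `ldes σ` when the letter is appended at the end.
-/

lemma sum_comp_eq_of_card_fiber_eq {α β γ M : Type*} [DecidableEq γ] [AddCommMonoid M]
    {s : Finset α} {t : Finset β} {f : α → γ} {g : β → γ}
    (h : ∀ c, #{a ∈ s | f a = c} = #{b ∈ t | g b = c}) (φ : γ → M) :
    ∑ a ∈ s, φ (f a) = ∑ b ∈ t, φ (g b) := by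
  have himage : s.image f = t.image g := by
    ext c
    simp only [mem_image, ← filter_nonempty_iff, ← card_pos, h]
  rw [sum_comp, sum_comp, himage]
  exact sum_congr rfl fun c _ => by rw [h]

lemma card_filter_le_eq_sum {α : Type*} (s : Finset α) (f : α → ℕ) (k : ℕ) :
    #{a ∈ s | f a ≤ k} = ∑ j ∈ range (k + 1), #{a ∈ s | f a = j} := by
  rw [card_eq_sum_card_fiberwise fun a ha => mem_range.2 (Nat.lt_succ_of_le (mem_filter.1 ha).2)]
  refine sum_congr rfl fun j hj => ?_
  rw [filter_filter]
  have := mem_range.1 hj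
  exact congrArg card (filter_congr fun a _ => ⟨fun h => h.2, fun h => ⟨by omega, h⟩⟩)

def catalanTriangle : ℕ → ℕ → ℕ
  | 0, k => if k = 0 then 1 else 0
  | n + 1, k => if k ≤ n then ∑ j ∈ range (k + 1), catalanTriangle n j else 0

lemma eq_catalanTriangle {c : ℕ → ℕ → ℕ} (h_zero : ∀ k, c 0 k = if k = 0 then 1 else 0)
    (h_succ : ∀ n k, k ≤ n → c (n + 1) k = ∑ j ∈ range (k + 1), c n j)
    (h_vanish : ∀ n k, n < k → c (n + 1) k = 0) (n k : ℕ) :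
    c n k = catalanTriangle n k := by
  induction n generalizing k with
  | zero => exact h_zero k
  | succ n ih =>
    rw [catalanTriangle]
    split_ifs with hk
    · rw [h_succ n k hk]
      exact sum_congr rfl fun j _ => ih j
    · exact h_vanish n k (not_le.1 hk)

def upsBelow (w : ℕ → Bool) (k : ℕ) : ℕ := #{i ∈ range k | w i}

/-- Dyck words of semilength `n` as `0`-indexed step sequences (`true` = up), padded with down
steps from position `2 * n` on. -/
def IsDyckWord (n : ℕ) (w : ℕ → Bool) : Prop :=
  (∀ i, w i → i < 2 * n) ∧ upsBelow w (2 * n) = n ∧ ∀ k ≤ 2 * n, k ≤ 2 * upsBelow w k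

section DyckWord

variable {w : ℕ → Bool} {n m k : ℕ}

lemma upsBelow_le : upsBelow w k ≤ k :=
  (card_filter_le _ _).trans (card_range k).le

lemma upsBelow_succ : upsBelow w (k + 1) = upsBelow w k + if w k then 1 else 0 := by
  unfold upsBelow
  rw [range_add_one, filter_insert]
  split_ifs with h
  · exact card_insert_of_notMem (by simp)
  · rfl

lemma upsBelow_congr {w' : ℕ → Bool} (h : ∀ i < k, w i = w' i) :
    upsBelow w k = upsBelow w' k :=
  congrArg card (filter_congr fun i hi => by rw [h i (mem_range.1 hi)])

lemma upsBelow_eq_of_forall_lt {l : ℕ} (hw : ∀ i, w i → i < k) (hkl : k ≤ l) :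
    upsBelow w l = upsBelow w k := by
  unfold upsBelow
  congr 1
  ext i
  simp only [mem_filter, mem_range]
  exact ⟨fun h => ⟨hw i h.2, h.2⟩, fun h => ⟨by omega, h.2⟩⟩

lemma card_fin_filter_eq_upsBelow (w : ℕ → Bool) {N : ℕ} (hk : k ≤ N) :
    #{i : Fin N | (i : ℕ) < k ∧ w i} = upsBelow w k := by
  refine card_nbij Fin.val (fun i hi => ?_) (fun i _ j _ h => Fin.ext h) (fun j hj => ?_)
  · simpa [upsBelow] using hi
  · obtain ⟨hjk, hwj⟩ : j < k ∧ w j := by simpa [upsBelow] using hj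
    exact ⟨⟨j, by omega⟩, by simpa using ⟨hjk, hwj⟩, rfl⟩

lemma lt_of_update_false (hle : ∀ i, w i → i ≤ m) {i : ℕ} (hi : Function.update w m false i) :
    i < m := by
  rcases eq_or_ne i m with rfl | hne
  · simp at hi
  · rw [Function.update_of_ne hne] at hi
    exact lt_of_le_of_ne (hle i hi) hne

lemma le_of_update_true (hlt : ∀ i, w i → i < m) {i : ℕ} (hi : Function.update w m true i) :
    i ≤ m := by
  rcases eq_or_ne i m with rfl | hne
  · exact le_rfl
  · rw [Function.update_of_ne hne] at hi
    exact (hlt i hi).le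

namespace IsDyckWord

lemma succ_lt (hw : IsDyckWord n w) {i : ℕ} (hi : w i) : i + 1 < 2 * n := by
  have hi2 := hw.1 i hi
  by_contra h
  have hs := upsBelow_succ (w := w) (k := i)
  rw [if_pos hi, show i + 1 = 2 * n by omega, hw.2.1] at hs
  have := hw.2.2 i (by omega)
  omega

lemma update_true (hw : IsDyckWord n w) (hm : ∀ i, w i → i < m) (hmn : m ≤ 2 * n) :
    IsDyckWord (n + 1) (Function.update w m true) := by
  set w' := Function.update w m true
  have hbelow : ∀ k ≤ m, upsBelow w' k = upsBelow w k := fun k hk =>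
    upsBelow_congr fun i hi => Function.update_of_ne (by omega) _ _
  have hups : ∀ i, w' i → i < m + 1 := fun i hi => Nat.lt_succ_of_le (le_of_update_true hm hi)
  have htotal : ∀ l, m + 1 ≤ l → upsBelow w' l = n + 1 := fun l hl => by
    rw [upsBelow_eq_of_forall_lt hups hl, upsBelow_succ, hbelow m le_rfl,
      ← upsBelow_eq_of_forall_lt hm hmn, hw.2.1]
    simp [w']
  refine ⟨fun i hi => (hups i hi).trans_le (by omega), htotal _ (by omega), fun k hk => ?_⟩
  rcases le_or_gt k m with hkm | hkm
  · rw [hbelow k hkm]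
    exact (hw.2.2 k (by omega)).trans (by omega)
  · rw [htotal k hkm]
    omega

lemma update_false (hw : IsDyckWord (n + 1) w) (hm : w m) (hle : ∀ i, w i → i ≤ m) :
    IsDyckWord n (Function.update w m false) := by
  set w' := Function.update w m false
  have hmn := hw.succ_lt hm
  have hbelow : ∀ k ≤ m, upsBelow w' k = upsBelow w k := fun k hk =>
    upsBelow_congr fun i hi => Function.update_of_ne (by omega) _ _
  have hups : ∀ i, w' i → i < m := fun i hi => lt_of_update_false hle hi
  have hupsm : upsBelow w m = n := by
    have hs := upsBelow_succ (w := w) (k := m)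
    rw [if_pos hm, ← upsBelow_eq_of_forall_lt (fun i hi => Nat.lt_succ_of_le (hle i hi))
      (show m + 1 ≤ 2 * (n + 1) by omega), hw.2.1] at hs
    omega
  have htotal : ∀ l, m ≤ l → upsBelow w' l = n := fun l hl => by
    rw [upsBelow_eq_of_forall_lt hups hl, hbelow m le_rfl, hupsm]
  refine ⟨fun i hi => (hups i hi).trans_le (by omega), htotal _ (by omega), fun k hk => ?_⟩
  rcases le_or_gt k m with hkm | hkm
  · rw [hbelow k hkm]
    exact hw.2.2 k (by omega)
  · rw [htotal k hkm.le]
    omega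

end IsDyckWord

lemma isDyckPred_iff_isDyckWord (hw : ∀ i, w i → i < 2 * n) :
    IsDyckPred n (fun i : Fin (2 * n) => w i) ↔ IsDyckWord n w := by
  have htotal : #{i : Fin (2 * n) | w i} = upsBelow w (2 * n) := by
    rw [← card_fin_filter_eq_upsBelow w le_rfl]
    simp
  unfold IsDyckPred IsDyckWord
  rw [htotal]
  constructor
  · rintro ⟨h_total, h_prefix⟩
    exact ⟨hw, h_total, fun k hk => card_fin_filter_eq_upsBelow w hk ▸ h_prefix k hk⟩
  · rintro ⟨-, h_total, h_prefix⟩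
    exact ⟨h_total, fun k hk => (card_fin_filter_eq_upsBelow w hk).symm ▸ h_prefix k hk⟩

end DyckWord

namespace DyckPath

variable {n : ℕ}

/-- `p.word i` is the `(i + 1)`-st step, so that `pstep p i = p.word (i - 1)`. -/
def word (p : DyckPath n) (i : ℕ) : Bool :=
  if h : i < 2 * n then p.1 ⟨i, h⟩ else false

lemma word_val (p : DyckPath n) (i : Fin (2 * n)) : p.word i = p.1 i := dif_pos i.isLt

lemma isDyckWord (p : DyckPath n) : IsDyckWord n p.word := by
  have hlt : ∀ i, p.word i → i < 2 * n := fun i hi => by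
    by_contra h
    simp [word, h] at hi
  rw [← isDyckPred_iff_isDyckWord hlt, funext (word_val p)]
  exact p.2

lemma word_injective : Function.Injective (word : DyckPath n → ℕ → Bool) :=
  fun p p' h => Subtype.ext <| funext fun i => by rw [← word_val, h, word_val]

def ofWord (w : ℕ → Bool) (hw : IsDyckWord n w) : DyckPath n :=
  ⟨fun i => w i, (isDyckPred_iff_isDyckWord hw.1).2 hw⟩

lemma word_ofWord {w : ℕ → Bool} (hw : IsDyckWord n w) : (ofWord w hw).word = w := by
  funext i
  by_cases h : i < 2 * n
  · exact dif_pos h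
  · rw [word, dif_neg h, eq_comm, Bool.eq_false_iff]
    exact fun hi => h (hw.1 i hi)

/-- Chosen so that `pathTail p = 2 * n - lastPeak p` by definition. -/
def lastPeak (p : DyckPath n) : ℕ :=
  ((Finset.Icc 1 (2 * n - 1)).filter
    (fun i => pstep p i = true ∧ pstep p (i + 1) = false)).sup id

lemma lastPeak_le_iff (p : DyckPath n) {m : ℕ} : lastPeak p ≤ m ↔ ∀ i, p.word i → i < m := by
  constructor
  · intro hm i hi
    by_contra hmi
    -- the last up step of the path is followed by a down step, so it is a peak
    obtain ⟨j, hj, hjmax⟩ := exists_max_image {j ∈ range (2 * n) | p.word j} id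
      ⟨i, mem_filter.2 ⟨mem_range.2 (p.isDyckWord.1 i hi), hi⟩⟩
    obtain ⟨-, hwj⟩ := mem_filter.1 hj
    have hj2n := p.isDyckWord.succ_lt hwj
    have hij : i ≤ j := hjmax i (mem_filter.2 ⟨mem_range.2 (p.isDyckWord.1 i hi), hi⟩)
    have hnext : p.word (j + 1) = false := by
      rw [Bool.eq_false_iff]
      intro h
      have := hjmax (j + 1) (mem_filter.2 ⟨mem_range.2 hj2n, h⟩)
      simp at this
    have hpeak : j + 1 ≤ lastPeak p := le_sup (f := id) <| mem_filter.2
      ⟨mem_Icc.2 ⟨by omega, by omega⟩, hwj, hnext⟩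
    omega
  · intro h
    refine Finset.sup_le fun i hi => ?_
    obtain ⟨hi1, hup, -⟩ := mem_filter.1 hi
    have := h (i - 1) hup
    have := (mem_Icc.1 hi1).1
    simp only [id]
    omega

lemma lastPeak_le (p : DyckPath n) : lastPeak p ≤ 2 * n - 1 :=
  (lastPeak_le_iff p).2 fun _ hi => by have := p.isDyckWord.succ_lt hi; omega

lemma le_lastPeak (p : DyckPath n) : n ≤ lastPeak p :=
  calc n = upsBelow p.word (2 * n) := p.isDyckWord.2.1.symm
    _ = upsBelow p.word (lastPeak p) :=
      upsBelow_eq_of_forall_lt ((lastPeak_le_iff p).1 le_rfl) (by have := lastPeak_le p; omega)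
    _ ≤ lastPeak p := upsBelow_le

lemma lastPeak_eq_succ_iff (p : DyckPath n) {m : ℕ} :
    lastPeak p = m + 1 ↔ p.word m ∧ ∀ i, p.word i → i ≤ m := by
  rw [le_antisymm_iff, Nat.succ_le_iff, ← not_le, lastPeak_le_iff, lastPeak_le_iff]
  constructor
  · rintro ⟨hle, hnot⟩
    push Not at hnot
    obtain ⟨i, hi, hmi⟩ := hnot
    have := hle i hi
    obtain rfl : i = m := by omega
    exact ⟨hi, fun j hj => Nat.lt_succ_iff.1 (hle j hj)⟩
  · rintro ⟨hm, hle⟩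
    exact ⟨fun i hi => Nat.lt_succ_of_le (hle i hi), fun h => (h m hm).false⟩

lemma sub_pathTail_eq_iff (p : DyckPath n) {k : ℕ} : n - pathTail p = k ↔ lastPeak p = n + k := by
  have := le_lastPeak p
  have := lastPeak_le p
  change n - (2 * n - lastPeak p) = k ↔ _
  omega

lemma sub_pathTail_le_iff (p : DyckPath n) {k : ℕ} : n - pathTail p ≤ k ↔ lastPeak p ≤ n + k := by
  have := lastPeak_le p
  change n - (2 * n - lastPeak p) ≤ k ↔ _
  omega

lemma card_lastPeak_eq_succ {m : ℕ} (hm : m ≤ 2 * n) :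
    #{p : DyckPath (n + 1) | lastPeak p = m + 1} = #{d : DyckPath n | lastPeak d ≤ m} := by
  have hfalse : ∀ p : DyckPath (n + 1), lastPeak p = m + 1 →
      IsDyckWord n (Function.update p.word m false) := fun p hp => by
    obtain ⟨hup, hle⟩ := (lastPeak_eq_succ_iff p).1 hp
    exact p.isDyckWord.update_false hup hle
  have htrue : ∀ d : DyckPath n, lastPeak d ≤ m →
      IsDyckWord (n + 1) (Function.update d.word m true) := fun d hd =>
    d.isDyckWord.update_true ((lastPeak_le_iff d).1 hd) hm
  refine card_bij' (fun p hp => ofWord _ (hfalse p (mem_filter.1 hp).2))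
    (fun d hd => ofWord _ (htrue d (mem_filter.1 hd).2)) (fun p hp => ?_) (fun d hd => ?_)
    (fun p hp => ?_) (fun d hd => ?_)
  · have hle := ((lastPeak_eq_succ_iff p).1 (mem_filter.1 hp).2).2
    refine mem_filter.2 ⟨mem_univ _, (lastPeak_le_iff _).2 fun i hi => ?_⟩
    rw [word_ofWord] at hi
    exact lt_of_update_false hle hi
  · have hlt := (lastPeak_le_iff d).1 (mem_filter.1 hd).2
    refine mem_filter.2 ⟨mem_univ _, (lastPeak_eq_succ_iff _).2 ?_⟩
    rw [word_ofWord]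
    exact ⟨by simp, fun i hi => le_of_update_true hlt hi⟩
  · apply word_injective
    have hup := ((lastPeak_eq_succ_iff p).1 (mem_filter.1 hp).2).1
    simp only [word_ofWord, Function.update_idem]
    exact Function.update_eq_self_iff.2 hup.symm
  · apply word_injective
    have hdown : d.word m = false := Bool.eq_false_iff.2 fun h =>
      lt_irrefl m ((lastPeak_le_iff d).1 (mem_filter.1 hd).2 m h)
    simp only [word_ofWord, Function.update_idem]
    exact Function.update_eq_self_iff.2 hdown.symm

end DyckPath

lemma card_dyckPath_sub_pathTail_eq_catalanTriangle (n k : ℕ) :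
    #{p : DyckPath n | n - pathTail p = k} = catalanTriangle n k := by
  refine eq_catalanTriangle (c := fun n k => #{p : DyckPath n | n - pathTail p = k})
    (fun k => ?_) (fun n k hk => ?_) (fun n k hk => ?_) n k
  · have hcard : Fintype.card (DyckPath 0) = 1 := rfl
    split_ifs with hk
    · simp [hk, hcard]
    · simp [Ne.symm hk]
  · rw [← card_filter_le_eq_sum]
    simp only [DyckPath.sub_pathTail_eq_iff, DyckPath.sub_pathTail_le_iff, add_right_comm]
    exact DyckPath.card_lastPeak_eq_succ (by omega)
  · refine card_eq_zero.2 (filter_eq_empty_iff.2 fun p _ => ?_)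
    rw [DyckPath.sub_pathTail_eq_iff]
    have := p.lastPeak_le
    omega

open Equiv

section Permutations

variable {n : ℕ}

lemma pval_le (σ : Perm (Fin n)) (i : ℕ) : pval σ i ≤ n := by
  unfold pval
  split_ifs with h
  · exact (σ ⟨i - 1, h⟩).isLt
  · omega

lemma pval_val_add_one (σ : Perm (Fin n)) (x : Fin n) : pval σ (x + 1) = σ x + 1 := by
  rw [pval, dif_pos (by omega)]
  rfl

lemma ldes_le_iff (σ : Perm (Fin n)) {m : ℕ} :
    ldes σ ≤ m ↔ ∀ i, m < i → i < n → pval σ i ≤ pval σ (i + 1) := by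
  simp only [ldes, Finset.sup_le_iff, desSet, mem_filter, mem_Icc, id]
  constructor
  · intro h i hmi hin
    by_contra hc
    have := h i ⟨⟨by omega, by omega⟩, by omega⟩
    omega
  · rintro h i ⟨⟨h1, h2⟩, hd⟩
    by_contra hc
    have := h i (by omega) (by omega)
    omega

lemma ldes_le (σ : Perm (Fin n)) : ldes σ ≤ n - 1 :=
  (ldes_le_iff σ).2 fun _ h h' => absurd h' (by omega)

lemma monotoneOn_pval_of_ldes_le (σ : Perm (Fin n)) {m : ℕ} (h : ldes σ ≤ m) :
    MonotoneOn (pval σ) (Set.Icc (m + 1) n) :=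
  monotoneOn_of_le_succ Set.ordConnected_Icc fun i _ hi hi' => by
    rw [Order.succ_eq_add_one] at hi' ⊢
    exact (ldes_le_iff σ).1 h i hi.1 hi'.2

/-- `σ` in one-line notation with the new largest letter inserted at position `m`. -/
def insertMax (m : Fin (n + 1)) (σ : Perm (Fin n)) : Perm (Fin (n + 1)) :=
  (finSuccEquiv' m).trans ((Equiv.optionCongr σ).trans (finSuccEquiv' (Fin.last n)).symm)

@[simp]
lemma insertMax_apply_self (m : Fin (n + 1)) (σ : Perm (Fin n)) :
    insertMax m σ m = Fin.last n := by
  simp [insertMax]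

@[simp]
lemma insertMax_apply_succAbove (m : Fin (n + 1)) (σ : Perm (Fin n)) (x : Fin n) :
    insertMax m σ (m.succAbove x) = (σ x).castSucc := by
  simp [insertMax, Fin.succAbove_last]

lemma insertMax_inj {m m' : Fin (n + 1)} {σ σ' : Perm (Fin n)} :
    insertMax m σ = insertMax m' σ' ↔ m = m' ∧ σ = σ' := by
  refine ⟨fun h => ?_, fun ⟨hm, hσ⟩ => hm ▸ hσ ▸ rfl⟩
  obtain rfl : m = m' := (insertMax m' σ').injective <| by
    rw [insertMax_apply_self, ← h, insertMax_apply_self]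
  refine ⟨rfl, Equiv.ext fun x => Fin.castSucc_injective _ ?_⟩
  rw [← insertMax_apply_succAbove, ← insertMax_apply_succAbove, h]

lemma exists_insertMax_eq (π : Perm (Fin (n + 1))) : ∃ m σ, insertMax m σ = π := by
  have hinj : Function.Injective (fun x : Fin (n + 1) × Perm (Fin n) => insertMax x.1 x.2) :=
    fun _ _ h => Prod.ext_iff.2 (insertMax_inj.1 h)
  have hcard : Fintype.card (Fin (n + 1) × Perm (Fin n)) = Fintype.card (Perm (Fin (n + 1))) := by
    simp [Fintype.card_perm, Nat.factorial_succ]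
  obtain ⟨⟨m, σ⟩, h⟩ := ((Fintype.bijective_iff_injective_and_card _).2 ⟨hinj, hcard⟩).2 π
  exact ⟨m, σ, h⟩

lemma pval_insertMax_succAbove (m : Fin (n + 1)) (σ : Perm (Fin n)) (x : Fin n) :
    pval (insertMax m σ) ((m.succAbove x : ℕ) + 1) = pval σ (x + 1) := by
  rw [pval_val_add_one, pval_val_add_one, insertMax_apply_succAbove, Fin.val_castSucc]

lemma pval_insertMax_of_le (m : Fin (n + 1)) (σ : Perm (Fin n)) {j : ℕ} (hj : 1 ≤ j)
    (hjm : j ≤ m) : pval (insertMax m σ) j = pval σ j := by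
  have hsucc : (m.succAbove ⟨j - 1, by omega⟩ : ℕ) = j - 1 := by
    rw [Fin.succAbove_of_castSucc_lt _ ⟨j - 1, by omega⟩
      (Fin.lt_def.2 (show j - 1 < (m : ℕ) by omega))]
    rfl
  have := pval_insertMax_succAbove m σ ⟨j - 1, by omega⟩
  rwa [hsucc, Nat.sub_add_cancel hj] at this

lemma pval_insertMax_self (m : Fin (n + 1)) (σ : Perm (Fin n)) :
    pval (insertMax m σ) (m + 1) = n + 1 := by
  rw [pval_val_add_one, insertMax_apply_self, Fin.val_last]

lemma pval_insertMax_of_lt (m : Fin (n + 1)) (σ : Perm (Fin n)) {j : ℕ} (hmj : m + 1 < j) :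
    pval (insertMax m σ) j = pval σ (j - 1) := by
  by_cases hjn : j ≤ n + 1
  · have hsucc : (m.succAbove ⟨j - 2, by omega⟩ : ℕ) = j - 1 := by
      rw [Fin.succAbove_of_le_castSucc _ _ (Fin.le_def.2 (show (m : ℕ) ≤ j - 2 by omega)),
        Fin.val_succ, Fin.val_mk]
      omega
    have := pval_insertMax_succAbove m σ ⟨j - 2, by omega⟩
    rwa [hsucc, Nat.sub_add_cancel (by omega), show j - 2 + 1 = j - 1 by omega] at this
  · simp [pval, show ¬ j - 1 < n + 1 by omega, show ¬ j - 1 - 1 < n by omega]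

lemma ldes_le_of_avoids321_insertMax {m : Fin (n + 1)} {σ : Perm (Fin n)}
    (h : Avoids321 (insertMax m σ)) : ldes σ ≤ m := by
  rw [ldes_le_iff]
  intro i hmi hin
  by_contra hc
  -- a descent of `σ` to the right of `m`, preceded by the inserted maximum, is a 321
  have hσ : σ ⟨i, hin⟩ < σ ⟨i - 1, by omega⟩ := by
    have h1 := pval_val_add_one σ ⟨i, hin⟩
    have h2 := pval_val_add_one σ ⟨i - 1, by omega⟩
    rw [Fin.val_mk] at h1
    rw [Fin.val_mk, Nat.sub_add_cancel (show 1 ≤ i by omega)] at h2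
    rw [Fin.lt_def]
    omega
  exact h ⟨m, m.succAbove ⟨i - 1, by omega⟩, m.succAbove ⟨i, hin⟩,
    (Fin.lt_succAbove_iff_le_castSucc _ _).2 (Fin.le_def.2 (show (m : ℕ) ≤ i - 1 by omega)),
    Fin.strictMono_succAbove m (Fin.mk_lt_mk.2 (by omega)), by simpa, by simp⟩

lemma avoids321_insertMax {m : Fin (n + 1)} {σ : Perm (Fin n)} (hσ : Avoids321 σ)
    (hld : ldes σ ≤ m) : Avoids321 (insertMax m σ) := by
  rintro ⟨i, j, k, hij, hjk, hkj, hji⟩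
  have hjm : j ≠ m := by
    rintro rfl
    rw [insertMax_apply_self] at hji
    exact (Fin.le_last _).not_gt hji
  have hkm : k ≠ m := by
    rintro rfl
    rw [insertMax_apply_self] at hkj
    exact (Fin.le_last _).not_gt hkj
  obtain ⟨b, rfl⟩ := Fin.exists_succAbove_eq hjm
  obtain ⟨c, rfl⟩ := Fin.exists_succAbove_eq hkm
  have hbc : b < c := (Fin.strictMono_succAbove m).lt_iff_lt.1 hjk
  have hcb : σ c < σ b := by simpa using hkj
  by_cases him : i = m
  · subst him
    -- `σ` increases to the right of the inserted maximum
    have hib : (i : ℕ) ≤ b := by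
      simpa [Fin.le_def] using (Fin.lt_succAbove_iff_le_castSucc _ _).1 hij
    have hmono := monotoneOn_pval_of_ldes_le σ hld ⟨by omega, b.isLt⟩ ⟨by omega, c.isLt⟩
      (show (b : ℕ) + 1 ≤ c + 1 by rw [Fin.lt_def] at hbc; omega)
    rw [pval_val_add_one, pval_val_add_one] at hmono
    exact hcb.not_ge (Fin.le_def.2 (by omega))
  · obtain ⟨a, rfl⟩ := Fin.exists_succAbove_eq him
    exact hσ ⟨a, b, c, (Fin.strictMono_succAbove m).lt_iff_lt.1 hij, hbc, hcb, by simpa using hji⟩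

lemma avoids321_insertMax_iff (m : Fin (n + 1)) (σ : Perm (Fin n)) :
    Avoids321 (insertMax m σ) ↔ Avoids321 σ ∧ ldes σ ≤ m := by
  refine ⟨fun h => ⟨fun ⟨i, j, k, hij, hjk, hkj, hji⟩ => h ⟨m.succAbove i, m.succAbove j,
    m.succAbove k, Fin.strictMono_succAbove m hij, Fin.strictMono_succAbove m hjk, by simpa,
    by simpa⟩, ldes_le_of_avoids321_insertMax h⟩, fun ⟨hσ, hld⟩ => avoids321_insertMax hσ hld⟩

lemma ldes_insertMax_castSucc (m : Fin n) (σ : Perm (Fin n)) (hld : ldes σ ≤ m) :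
    ldes (insertMax m.castSucc σ) = m + 1 := by
  refine le_antisymm ((ldes_le_iff _).2 fun i hmi hin => ?_) (Nat.succ_le_of_lt ?_)
  · rw [pval_insertMax_of_lt _ _ (by rw [Fin.val_castSucc]; omega),
      pval_insertMax_of_lt _ _ (by rw [Fin.val_castSucc]; omega)]
    have := (ldes_le_iff σ).1 hld (i - 1) (by omega) (by omega)
    rwa [Nat.sub_add_cancel (by omega)] at this
  · rw [← not_le, ldes_le_iff]
    intro h
    have := h (m + 1) (by omega) (by omega)
    rw [show (m : ℕ) + 1 = (m.castSucc : ℕ) + 1 from rfl, pval_insertMax_self,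
      pval_insertMax_of_lt _ _ (by rw [Fin.val_castSucc]; omega)] at this
    have := pval_le σ ((m.castSucc : ℕ) + 1 + 1 - 1)
    omega

lemma ldes_insertMax_last (σ : Perm (Fin n)) : ldes (insertMax (Fin.last n) σ) = ldes σ := by
  refine eq_of_forall_ge_iff fun j => ?_
  rw [ldes_le_iff, ldes_le_iff]
  constructor
  · intro h i hji hin
    have := h i hji (by omega)
    rwa [pval_insertMax_of_le _ _ (by omega) (by rw [Fin.val_last]; omega),
      pval_insertMax_of_le _ _ (by omega) (by rw [Fin.val_last]; omega)] at this
  · intro h i hji hin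
    rw [pval_insertMax_of_le _ _ (by omega) (by rw [Fin.val_last]; omega)]
    rcases Nat.lt_or_ge i n with hin' | hin'
    · rw [pval_insertMax_of_le _ _ (by omega) (by rw [Fin.val_last]; omega)]
      exact h i hji hin'
    · have := pval_insertMax_self (Fin.last n) σ
      rw [Fin.val_last] at this
      rw [show i = n by omega, this]
      exact (pval_le σ n).trans (Nat.le_succ n)

end Permutations

lemma card_tset_succ_ldes_eq {n k : ℕ} (hk : k ≤ n) :
    #{π ∈ Tset (n + 1) | ldes π = k} = #{σ ∈ Tset n | ldes σ ≤ k} := by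
  simp only [Tset, filter_filter]
  symm
  refine card_bij (fun σ _ => insertMax (if ldes σ = k then Fin.last n else ⟨k - 1, by omega⟩) σ)
    (fun σ hσ => ?_)
    (fun σ _ τ _ h => (insertMax_inj.1 h).2) (fun π hπ => ?_)
  · obtain ⟨hav, hle⟩ := (mem_filter.1 hσ).2
    refine mem_filter.2 ⟨mem_univ _, ?_⟩
    split_ifs with h
    · refine ⟨avoids321_insertMax hav (by rw [Fin.val_last]; omega), ?_⟩
      rw [ldes_insertMax_last, h]
    · have hle' : ldes σ ≤ (⟨k - 1, by omega⟩ : Fin n) := show ldes σ ≤ k - 1 by omega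
      rw [show (⟨k - 1, _⟩ : Fin (n + 1)) = Fin.castSucc ⟨k - 1, by omega⟩ from rfl]
      refine ⟨avoids321_insertMax hav hle', ?_⟩
      rw [ldes_insertMax_castSucc _ σ hle', Fin.val_mk]
      omega
  · obtain ⟨m, σ, rfl⟩ := exists_insertMax_eq π
    obtain ⟨hav, hπk⟩ := (mem_filter.1 hπ).2
    obtain ⟨hσ, hle⟩ := (avoids321_insertMax_iff m σ).1 hav
    rcases Fin.eq_castSucc_or_eq_last m with ⟨m, rfl⟩ | rfl
    · rw [ldes_insertMax_castSucc m σ hle] at hπk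
      rw [Fin.val_castSucc] at hle
      refine ⟨σ, mem_filter.2 ⟨mem_univ _, hσ, by omega⟩, ?_⟩
      rw [if_neg (by omega)]
      exact congrArg (insertMax · σ) (Fin.ext (by rw [Fin.val_castSucc, Fin.val_mk]; omega))
    · rw [ldes_insertMax_last] at hπk
      exact ⟨σ, mem_filter.2 ⟨mem_univ _, hσ, hπk.le⟩, by rw [if_pos hπk]⟩

lemma card_tset_ldes_eq_catalanTriangle (n k : ℕ) :
    #{π ∈ Tset n | ldes π = k} = catalanTriangle n k := by
  refine eq_catalanTriangle (c := fun n k => #{π ∈ Tset n | ldes π = k})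
    (fun k => ?_) (fun n k hk => ?_) (fun n k hk => ?_) n k
  · have hT : Tset 0 = univ := filter_true_of_mem fun _ _ ⟨i, _⟩ => i.elim0
    have hldes : ∀ π : Perm (Fin 0), ldes π = 0 := fun π => Nat.le_zero.1 (ldes_le π)
    split_ifs with hk
    · simp [hk, hldes, hT]
    · simp [hldes, Ne.symm hk]
  · rw [card_tset_succ_ldes_eq hk, card_filter_le_eq_sum]
  · refine card_eq_zero.2 (filter_eq_empty_iff.2 fun π _ => ?_)
    have := ldes_le π
    omega

theorem tail_ldes_equidistribution (n : ℕ) (q : ℤ) :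
    ∑ p : DyckPath n, q ^ (n - pathTail p) = ∑ π ∈ Tset n, q ^ ldes π :=
  sum_comp_eq_of_card_fiber_eq (fun k => by
    rw [card_dyckPath_sub_pathTail_eq_catalanTriangle, card_tset_ldes_eq_catalanTriangle]) (q ^ ·)
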